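/- Let k ≥ 1 be an integer and set l = k+3. Then the set R^{k+3}_k has exactly (k+4)(k+3) elements (it is a root system of type A_{k+3}). -/
import Mathlib


/-- The symmetric bilinear form on `ℤ^{l+1}` with `B(e₀,e₀) = k`, `B(eᵢ,eᵢ) = -1` for
`1 ≤ i ≤ l`, and `B(eᵢ,eⱼ) = 0` for `i ≠ j`. -/
def bformZ (k l : ℕ) (v w : Fin (l + 1) → ℤ) : ℤ :=
  ((k : ℤ) + 1) * (v 0 * w 0) - ∑ i, v i * w i

/-- The vector `ω' = -(k+2)·e₀ + k·(e₁ + ⋯ + e_l)`. -/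
def omegaZ (k l : ℕ) : Fin (l + 1) → ℤ :=
  fun i => if i = 0 then -((k : ℤ) + 2) else (k : ℤ)

/-- The root system `R^l_k = {v ∈ ℤ^{l+1} : B(v,v) = -2, B(v,ω') = 0}`. -/
def rootSet (k l : ℕ) : Set (Fin (l + 1) → ℤ) :=
  {v | bformZ k l v v = -2 ∧ bformZ k l v (omegaZ k l) = 0}

lemma mem_iff (k : ℕ) (hk : 1 ≤ k) (v : Fin (k + 3 + 1) → ℤ) :
    v ∈ rootSet k (k + 3) ↔
      (∑ i : Fin (k + 3), v i.succ = -((k : ℤ) + 2) * v 0) ∧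
      (∑ i : Fin (k + 3), v i.succ ^ 2 = (k : ℤ) * v 0 ^ 2 + 2) := by
  have hk' : (1 : ℤ) ≤ (k : ℤ) := by exact_mod_cast hk
  have hk0 : (k : ℤ) ≠ 0 := by linarith
  unfold rootSet bformZ omegaZ
  rw [Set.mem_setOf_eq, Fin.sum_univ_succ (f := fun i => v i * v i),
    Fin.sum_univ_succ (f := fun i => v i * (if i = 0 then -((k : ℤ) + 2) else (k : ℤ)))]
  simp only [Fin.succ_ne_zero, if_true, if_false, if_pos rfl]
  have hmul : ∑ i : Fin (k + 3), v i.succ * (k : ℤ)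
      = (∑ i : Fin (k + 3), v i.succ) * (k : ℤ) := (Finset.sum_mul ..).symm
  have hsq : ∑ i : Fin (k + 3), v i.succ * v i.succ
      = ∑ i : Fin (k + 3), v i.succ ^ 2 := Finset.sum_congr rfl fun i _ => (sq _).symm
  rw [hmul, hsq]
  set S := ∑ i : Fin (k + 3), v i.succ with hS
  set Q := ∑ i : Fin (k + 3), v i.succ ^ 2 with hQ
  constructor
  · rintro ⟨h1, h2⟩
    have h3 : (k : ℤ) * (S - (-((k : ℤ) + 2) * v 0)) = 0 := by linear_combination -h2
    have h4 : S - (-((k : ℤ) + 2) * v 0) = 0 := by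
      rcases mul_eq_zero.1 h3 with h | h
      · exact absurd h hk0
      · exact h
    refine ⟨by linarith, by nlinarith [h1]⟩
  · rintro ⟨h1, h2⟩
    constructor
    · nlinarith [h2]
    · rw [h1]; try ring

/-- roots with zeroth coordinate 0 : `e_{p.succ} - e_{q.succ}`. -/
def r1 (k : ℕ) (p q : Fin (k + 3)) : Fin (k + 3 + 1) → ℤ :=
  fun i => (if i = p.succ then 1 else 0) - (if i = q.succ then 1 else 0)

/-- roots with zeroth coordinate 1. -/
def r2 (k : ℕ) (j : Fin (k + 3)) : Fin (k + 3 + 1) → ℤ :=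
  fun i => if i = 0 then 1 else if i = j.succ then 0 else -1

lemma r1_zero (k : ℕ) (p q : Fin (k + 3)) : r1 k p q 0 = 0 := by
  simp [r1, (Fin.succ_ne_zero p).symm, (Fin.succ_ne_zero q).symm]

lemma r1_succ (k : ℕ) (p q i : Fin (k + 3)) :
    r1 k p q i.succ = (if i = p then 1 else 0) - (if i = q then 1 else 0) := by
  simp [r1, Fin.succ_inj]

lemma r2_zero (k : ℕ) (j : Fin (k + 3)) : r2 k j 0 = 1 := by simp [r2]

lemma r2_succ (k : ℕ) (j i : Fin (k + 3)) :
    r2 k j i.succ = if i = j then 0 else -1 := by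
  simp [r2, Fin.succ_ne_zero, Fin.succ_inj]

lemma r1_mem (k : ℕ) (hk : 1 ≤ k) (p q : Fin (k + 3)) (hpq : p ≠ q) :
    r1 k p q ∈ rootSet k (k + 3) := by
  rw [mem_iff k hk]
  rw [show (∑ i : Fin (k+3), r1 k p q i.succ)
      = ∑ i : Fin (k+3), ((if i = p then (1:ℤ) else 0) - (if i = q then 1 else 0)) from
    Finset.sum_congr rfl fun i _ => r1_succ k p q i]
  rw [show (∑ i : Fin (k+3), r1 k p q i.succ ^ 2)
      = ∑ i : Fin (k+3), ((if i = p then (1:ℤ) else 0) + (if i = q then 1 else 0)) by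
    refine Finset.sum_congr rfl fun i _ => ?_
    rw [r1_succ]
    rcases eq_or_ne i p with rfl | hip
    · simp [hpq]
    · rcases eq_or_ne i q with rfl | hiq
      · simp [hip]
      · simp [hip, hiq]]
  rw [Finset.sum_sub_distrib, Finset.sum_add_distrib]
  simp [r1_zero]

lemma r2_mem (k : ℕ) (hk : 1 ≤ k) (j : Fin (k + 3)) :
    r2 k j ∈ rootSet k (k + 3) := by
  rw [mem_iff k hk]
  rw [show (∑ i : Fin (k+3), r2 k j i.succ)
      = ∑ i : Fin (k+3), ((if i = j then (1:ℤ) else 0) - 1) from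
    Finset.sum_congr rfl fun i _ => by
      rw [r2_succ]; rcases eq_or_ne i j with rfl | h
      · simp
      · simp [h]]
  rw [show (∑ i : Fin (k+3), r2 k j i.succ ^ 2)
      = ∑ i : Fin (k+3), (1 - (if i = j then (1:ℤ) else 0)) from
    Finset.sum_congr rfl fun i _ => by
      rw [r2_succ]; rcases eq_or_ne i j with rfl | h
      · simp
      · simp [h]]
  rw [Finset.sum_sub_distrib, Finset.sum_sub_distrib]
  simp only [Finset.sum_const, Finset.card_univ, Fintype.card_fin, nsmul_eq_mul,
    Finset.sum_ite_eq', Finset.mem_univ, if_true, r2_zero]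
  constructor <;> push_cast <;> ring

lemma neg_mem (k : ℕ) (hk : 1 ≤ k) (v : Fin (k + 3 + 1) → ℤ)
    (hv : v ∈ rootSet k (k + 3)) : -v ∈ rootSet k (k + 3) := by
  rw [mem_iff k hk] at hv ⊢
  obtain ⟨h1, h2⟩ := hv
  constructor
  · simp only [Pi.neg_apply, Finset.sum_neg_distrib, h1]; try ring
  · simp only [Pi.neg_apply, neg_sq, h2]; try ring

lemma case_zero (k : ℕ) (v : Fin (k + 3 + 1) → ℤ) (h0 : v 0 = 0)
    (h1 : ∑ i : Fin (k + 3), v i.succ = 0)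
    (h2 : ∑ i : Fin (k + 3), v i.succ ^ 2 = 2) :
    ∃ p q : Fin (k + 3), p ≠ q ∧ v = r1 k p q := by
  have hb : ∀ i : Fin (k + 3), v i.succ = -1 ∨ v i.succ = 0 ∨ v i.succ = 1 := by
    intro i
    have hle : v i.succ ^ 2 ≤ 2 := by
      rw [← h2]
      exact Finset.single_le_sum (f := fun j : Fin (k+3) => v j.succ ^ 2)
        (fun j _ => sq_nonneg _) (Finset.mem_univ i)
    by_contra hc
    push_neg at hc
    have h5 : 2 ≤ v i.succ ∨ v i.succ ≤ -2 := by omega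
    rcases h5 with h5 | h5 <;> nlinarith
  have hcnt : (∑ i : Fin (k + 3), if v i.succ ≠ 0 then (1 : ℤ) else 0) = 2 := by
    rw [← h2]
    refine Finset.sum_congr rfl fun i _ => ?_
    rcases hb i with h | h | h <;> simp [h]
  rw [Finset.sum_boole] at hcnt
  have hcard : (Finset.univ.filter (fun i : Fin (k + 3) => v i.succ ≠ 0)).card = 2 := by
    exact_mod_cast hcnt
  obtain ⟨p, q, hpq, hT⟩ := Finset.card_eq_two.1 hcard
  have hmem : ∀ i : Fin (k + 3), v i.succ ≠ 0 ↔ (i = p ∨ i = q) := by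
    intro i
    constructor
    · intro h
      have : i ∈ Finset.univ.filter (fun i : Fin (k + 3) => v i.succ ≠ 0) := by
        simp [h]
      rw [hT] at this; simpa using this
    · rintro (rfl | rfl)
      · have : i ∈ Finset.univ.filter (fun i : Fin (k + 3) => v i.succ ≠ 0) := by
          rw [hT]; exact Finset.mem_insert_self _ _
        exact (Finset.mem_filter.1 this).2
      · have : i ∈ Finset.univ.filter (fun i : Fin (k + 3) => v i.succ ≠ 0) := by
          rw [hT]; exact Finset.mem_insert_of_mem (Finset.mem_singleton_self _)
        exact (Finset.mem_filter.1 this).2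
  have hp : v p.succ ≠ 0 := (hmem p).2 (Or.inl rfl)
  have hq : v q.succ ≠ 0 := (hmem q).2 (Or.inr rfl)
  have hsum : v p.succ + v q.succ = 0 := by
    have hfil : ∑ i ∈ Finset.univ.filter (fun i : Fin (k + 3) => v i.succ ≠ 0), v i.succ
        = ∑ i : Fin (k + 3), v i.succ :=
      Finset.sum_filter_of_ne (fun i _ h => h)
    rw [hT, Finset.sum_pair hpq] at hfil
    rw [hfil, h1]
  have hvz : ∀ i : Fin (k + 3), i ≠ p → i ≠ q → v i.succ = 0 := by
    intro i hip hiq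
    by_contra h
    rcases (hmem i).1 h with rfl | rfl
    · exact hip rfl
    · exact hiq rfl
  have key : ∀ p q : Fin (k+3), p ≠ q → v p.succ = 1 → v q.succ = -1 →
      (∀ i : Fin (k + 3), i ≠ p → i ≠ q → v i.succ = 0) → v = r1 k p q := by
    intro p q hpq hp1 hq1 hz
    funext i
    refine Fin.cases ?_ (fun j => ?_) i
    · rw [h0, r1_zero]
    · rw [r1_succ]
      rcases eq_or_ne j p with rfl | hjp
    
      · simp [hpq, hp1]
      · rcases eq_or_ne j q with rfl | hjq
        · simp [hjp, hq1]
        · simp [hjp, hjq, hz j hjp hjq]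
  rcases hb p with hp1 | hp1 | hp1
  · have hq1 : v q.succ = 1 := by rcases hb q with h | h | h <;> omega
    exact ⟨q, p, hpq.symm, key q p hpq.symm hq1 hp1 (fun i h h' => hvz i h' h)⟩
  · exact absurd hp1 hp
  · have hq1 : v q.succ = -1 := by rcases hb q with h | h | h <;> omega
    exact ⟨p, q, hpq, key p q hpq hp1 hq1 hvz⟩

lemma case_one (k : ℕ) (v : Fin (k + 3 + 1) → ℤ) (h0 : v 0 = 1)
    (h1 : ∑ i : Fin (k + 3), v i.succ = -((k : ℤ) + 2))
    (h2 : ∑ i : Fin (k + 3), v i.succ ^ 2 = (k : ℤ) + 2) :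
    ∃ j : Fin (k + 3), v = r2 k j := by
  have hz : ∑ i : Fin (k + 3), (v i.succ ^ 2 + v i.succ) = 0 := by
    rw [Finset.sum_add_distrib, h1, h2]; ring
  have hnn : ∀ i ∈ (Finset.univ : Finset (Fin (k + 3))), 0 ≤ v i.succ ^ 2 + v i.succ := by
    intro i _
    rcases le_or_gt 0 (v i.succ) with h | h
    · exact add_nonneg (sq_nonneg _) h
    · have hle : v i.succ + 1 ≤ 0 := by omega
      have : v i.succ ^ 2 + v i.succ = v i.succ * (v i.succ + 1) := by ring
      rw [this]
      nlinarith [h, hle]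
  have hall := (Finset.sum_eq_zero_iff_of_nonneg hnn).1 hz
  have hb : ∀ i : Fin (k + 3), v i.succ = 0 ∨ v i.succ = -1 := by
    intro i
    have := hall i (Finset.mem_univ i)
    have h' : v i.succ * (v i.succ + 1) = 0 := by nlinarith [this]
    rcases mul_eq_zero.1 h' with h | h
    · exact Or.inl h
    · exact Or.inr (by omega)
  have hcnt : (∑ i : Fin (k + 3), if v i.succ = 0 then (1 : ℤ) else 0) = 1 := by
    have : ∀ i : Fin (k + 3), (if v i.succ = 0 then (1 : ℤ) else 0) = v i.succ + 1 := by
      intro i; rcases hb i with h | h <;> simp [h]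
    rw [Finset.sum_congr rfl fun i _ => this i, Finset.sum_add_distrib, h1]
    simp
  rw [Finset.sum_boole] at hcnt
  have hcard : (Finset.univ.filter (fun i : Fin (k + 3) => v i.succ = 0)).card = 1 := by
    exact_mod_cast hcnt
  obtain ⟨j, hj⟩ := Finset.card_eq_one.1 hcard
  refine ⟨j, funext fun i => ?_⟩
  refine Fin.cases ?_ (fun i => ?_) i
  · rw [h0, r2_zero]
  · rw [r2_succ]
    rcases eq_or_ne i j with rfl | hij
    · have : i ∈ Finset.univ.filter (fun i : Fin (k + 3) => v i.succ = 0) := by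
        rw [hj]; simp
      simpa using (Finset.mem_filter.1 this).2
    · have : i ∉ Finset.univ.filter (fun i : Fin (k + 3) => v i.succ = 0) := by
        rw [hj]; simp [hij]
      simp only [Finset.mem_filter, Finset.mem_univ, true_and] at this
      rcases hb i with h | h
      · exact absurd h this
      · simp [hij, h]

lemma classify (k : ℕ) (hk : 1 ≤ k) (v : Fin (k + 3 + 1) → ℤ)
    (hv : v ∈ rootSet k (k + 3)) :
    (∃ p q : Fin (k + 3), p ≠ q ∧ v = r1 k p q) ∨
    (∃ j : Fin (k + 3), v = r2 k j) ∨ (∃ j : Fin (k + 3), v = -(r2 k j)) := by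
  have hk' : (1 : ℤ) ≤ (k : ℤ) := by exact_mod_cast hk
  obtain ⟨h1, h2⟩ := (mem_iff k hk v).1 hv
  have hcs := sq_sum_le_card_mul_sum_sq (s := Finset.univ)
    (f := fun i : Fin (k + 3) => v i.succ)
  rw [h1, h2, Finset.card_univ, Fintype.card_fin] at hcs
  push_cast at hcs
  have h3 : v 0 ^ 2 < 2 := by nlinarith [hcs, sq_nonneg (v 0)]
  have h4 : v 0 ^ 2 ≤ 1 := by linarith [Int.lt_iff_add_one_le.mp h3]
  have h5 : v 0 = -1 ∨ v 0 = 0 ∨ v 0 = 1 := by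
    have hu : v 0 ≤ 1 := by nlinarith [sq_nonneg (v 0 - 1)]
    have hl : -1 ≤ v 0 := by nlinarith [sq_nonneg (v 0 + 1)]
    omega
  rcases h5 with h0 | h0 | h0
  · right; right
    have h0' : (-v) 0 = 1 := by simp [h0]
    have h1' : ∑ i : Fin (k + 3), (-v) i.succ = -((k : ℤ) + 2) := by
      simp only [Pi.neg_apply, Finset.sum_neg_distrib, h1, h0]; ring
    have h2' : ∑ i : Fin (k + 3), (-v) i.succ ^ 2 = (k : ℤ) + 2 := by
      simp only [Pi.neg_apply, neg_sq, h2, h0]; ring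
    obtain ⟨j, hj⟩ := case_one k (-v) h0' h1' h2'
    exact ⟨j, by rw [← hj]; simp⟩
  · left
    rw [h0] at h1 h2
    exact case_zero k v h0 (by simpa using h1) (by simpa using h2)
  · right; left
    rw [h0] at h1 h2
    exact case_one k v h0 (by simpa using h1) (by simpa using h2)

lemma r2_inj (k : ℕ) : Function.Injective (r2 k) := by
  intro j j' h
  have h1 := congrFun h j.succ
  rw [r2_succ, r2_succ] at h1
  by_contra hne
  simp [hne] at h1

lemma r1_injOn (k : ℕ) :
    Set.InjOn (fun p : Fin (k + 3) × Fin (k + 3) => r1 k p.1 p.2)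
      ↑(Finset.univ.offDiag (α := Fin (k + 3))) := by
  intro a ha b hb h
  simp only [Finset.coe_offDiag, Set.mem_offDiag] at ha hb
  obtain ⟨-, -, ha⟩ := ha
  obtain ⟨-, -, hb⟩ := hb
  have h1 := congrFun h a.1.succ
  have h2 := congrFun h a.2.succ
  simp only [r1_succ, eq_self_iff_true, if_true, if_neg ha, if_neg (Ne.symm ha),
    sub_zero, zero_sub] at h1 h2
  have e1 : a.1 = b.1 := by
    by_contra hne
    rcases eq_or_ne a.1 b.2 with he | hne2
    · rw [if_neg hne, if_pos he] at h1; omega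
    · rw [if_neg hne, if_neg hne2] at h1; omega
  have e2 : a.2 = b.2 := by
    by_contra hne
    rcases eq_or_ne a.2 b.1 with he | hne2
    · rw [if_pos he, if_neg hne] at h2; omega
    · rw [if_neg hne2, if_neg hne] at h2; omega
  exact Prod.ext e1 e2


/-- For `l = k+3`, the root system `R^{k+3}_k` (of type `A_{k+3}`) has exactly
`(k+4)(k+3)` elements. -/
theorem rootSet_card_k_plus_three (k : ℕ) (hk : 1 ≤ k) :
    (rootSet k (k + 3)).ncard = (k + 4) * (k + 3) := by
  classical
  set F1 : Finset (Fin (k + 3 + 1) → ℤ) :=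
    (Finset.univ.offDiag).image (fun p : Fin (k + 3) × Fin (k + 3) => r1 k p.1 p.2) with hF1
  set F2 : Finset (Fin (k + 3 + 1) → ℤ) := Finset.univ.image (r2 k) with hF2
  set F3 : Finset (Fin (k + 3 + 1) → ℤ) :=
    Finset.univ.image (fun j : Fin (k + 3) => -(r2 k j)) with hF3
  have hz1 : ∀ v ∈ F1, v 0 = 0 := by
    intro v hv
    obtain ⟨p, -, rfl⟩ := Finset.mem_image.1 hv
    exact r1_zero k p.1 p.2
  have hz2 : ∀ v ∈ F2, v 0 = 1 := by
    intro v hv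
    obtain ⟨j, -, rfl⟩ := Finset.mem_image.1 hv
    exact r2_zero k j
  have hz3 : ∀ v ∈ F3, v 0 = -1 := by
    intro v hv
    obtain ⟨j, -, rfl⟩ := Finset.mem_image.1 hv
    simp [r2_zero]
  have hset : rootSet k (k + 3) = ↑(F1 ∪ F2 ∪ F3) := by
    ext v
    simp only [Finset.coe_union, Set.mem_union, Finset.mem_coe]
    constructor
    · intro hv
      rcases classify k hk v hv with ⟨p, q, hpq, rfl⟩ | ⟨j, rfl⟩ | ⟨j, rfl⟩
      · exact Or.inl (Or.inl (Finset.mem_image.2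
          ⟨(p, q), Finset.mem_offDiag.2 ⟨Finset.mem_univ _, Finset.mem_univ _, hpq⟩, rfl⟩))
      · exact Or.inl (Or.inr (Finset.mem_image.2 ⟨j, Finset.mem_univ _, rfl⟩))
      · exact Or.inr (Finset.mem_image.2 ⟨j, Finset.mem_univ _, rfl⟩)
    · rintro ((hv | hv) | hv)
      · obtain ⟨p, hp, rfl⟩ := Finset.mem_image.1 hv
        exact r1_mem k hk p.1 p.2 (Finset.mem_offDiag.1 hp).2.2
      · obtain ⟨j, -, rfl⟩ := Finset.mem_image.1 hv
        exact r2_mem k hk j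
      · obtain ⟨j, -, rfl⟩ := Finset.mem_image.1 hv
        exact neg_mem k hk _ (r2_mem k hk j)
  rw [hset, Set.ncard_coe_finset]
  have d12 : Disjoint F1 F2 := Finset.disjoint_left.2 fun v h1 h2 => by
    have := hz1 v h1; have := hz2 v h2; omega
  have d13 : Disjoint F1 F3 := Finset.disjoint_left.2 fun v h1 h3 => by
    have := hz1 v h1; have := hz3 v h3; omega
  have d23 : Disjoint F2 F3 := Finset.disjoint_left.2 fun v h2 h3 => by
    have := hz2 v h2; have := hz3 v h3; omega
  rw [Finset.card_union_of_disjoint (Finset.disjoint_union_left.2 ⟨d13, d23⟩),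
    Finset.card_union_of_disjoint d12]
  have c1 : F1.card = (k + 3) * (k + 3) - (k + 3) := by
    rw [hF1, Finset.card_image_of_injOn (r1_injOn k), Finset.offDiag_card,
      Finset.card_univ, Fintype.card_fin]
  have c2 : F2.card = k + 3 := by
    rw [hF2, Finset.card_image_of_injective _ (r2_inj k), Finset.card_univ, Fintype.card_fin]
  have c3 : F3.card = k + 3 := by
    rw [hF3, Finset.card_image_of_injective _ (fun a b h => r2_inj k (neg_injective h)),
      Finset.card_univ, Fintype.card_fin]
  rw [c1, c2, c3]
  have : (k + 3) * (k + 3) = (k + 2) * (k + 3) + (k + 3) := by ring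
  rw [this, Nat.add_sub_cancel]
  ring
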